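/- Let p be a prime. Define the complex matrix C'' of size p² × p³ whose rows are indexed by pairs (φ, γ) ∈ (ZMod p)² and whose columns are indexed by triples (a, b, c) ∈ (ZMod p)³, with entries C''((φ,γ), (a,b,c)) = (1/p)·e_p(γ·(a·φ + c) + b·φ). Then every column of C'' is a unit vector in ℂ^{p²}, and the coherence of C'' equals 1/p; more precisely, for distinct column indices (a,b,c) ≠ (a',b',c'), the inner product of the corresponding columns has absolute value 1/p when a ≠ a' and 0 when a = a', and the maximum over all distinct pairs is 1/p. -/

import Mathlib

open scoped ComplexInnerProductSpace

/-- The canonical additive character of `ZMod p`: `ep p x = exp(2πi·x̂/p)`. -/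
noncomputable def ep (p : ℕ) (x : ZMod p) : ℂ :=
  Complex.exp (2 * Real.pi * Complex.I * (x.val : ℂ) / (p : ℂ))

/-!
Write `ψ = e_p`. Conjugating one column against another and summing over `γ` first, the
`γ`-sum is `p` times the indicator of the line `(a' - a) φ + (c' - c) = 0`, so
`⟪v (a,b,c), v (a',b',c')⟫ = p⁻¹ ∑ ψ ((b' - b) φ)` over the `φ` on that line. For `a ≠ a'` the
line is a single point, giving a unimodular term over `p`; for `a = a'` it is either empty or
(when `c = c'`) all of `ZMod p`, where the full character sum in `φ` vanishes because `b ≠ b'`.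
-/

lemma ep_eq_stdAddChar {p : ℕ} [NeZero p] (x : ZMod p) : ep p x = ZMod.stdAddChar x := by
  rw [ZMod.stdAddChar_apply, ZMod.toCircle_apply, ep]

section ChirpColumn

variable {F : Type*} [Field F] [Fintype F] (ψ : AddChar F ℂ)

noncomputable def chirpColumn (a b c : F) : EuclideanSpace ℂ (F × F) :=
  WithLp.toLp 2 fun φγ => (1 / (Fintype.card F : ℂ)) * ψ (φγ.2 * (a * φγ.1 + c) + b * φγ.1)

variable {ψ}

lemma inner_chirpColumn [DecidableEq F] (hψ : ψ.IsPrimitive) (a b c a' b' c' : F) :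
    ⟪chirpColumn ψ a b c, chirpColumn ψ a' b' c'⟫ =
      (1 / (Fintype.card F : ℂ)) *
        ∑ φ : F, if (a' - a) * φ + (c' - c) = 0 then ψ ((b' - b) * φ) else 0 := by
  have hn : (Fintype.card F : ℂ) ≠ 0 := Nat.cast_ne_zero.mpr Fintype.card_ne_zero
  rw [PiLp.inner_apply, Fintype.sum_prod_type, Finset.mul_sum]
  refine Finset.sum_congr rfl fun φ _ => ?_
  have hterm : ∀ γ : F, ⟪(chirpColumn ψ a b c) (φ, γ), (chirpColumn ψ a' b' c') (φ, γ)⟫ =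
      (1 / (Fintype.card F : ℂ)) ^ 2 * (ψ (γ * ((a' - a) * φ + (c' - c))) * ψ ((b' - b) * φ)) := by
    intro γ
    simp only [chirpColumn, PiLp.toLp_apply, RCLike.inner_apply, map_mul, ← AddChar.map_neg_eq_conj]
    rw [map_div₀, map_one, map_natCast, mul_mul_mul_comm, ← AddChar.map_add_eq_mul,
      ← AddChar.map_add_eq_mul, sq]
    congr 2
    ring
  -- orthogonality in `γ` kills every `φ` off the line `(a' - a) φ + (c' - c) = 0`
  simp only [hterm, ← Finset.mul_sum, ← Finset.sum_mul, AddChar.sum_mulShift _ hψ]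
  split_ifs
  · field_simp
  · simp

lemma inner_chirpColumn_self (hψ : ψ.IsPrimitive) (a b c : F) :
    ⟪chirpColumn ψ a b c, chirpColumn ψ a b c⟫ = 1 := by
  classical
  have hn : (Fintype.card F : ℂ) ≠ 0 := Nat.cast_ne_zero.mpr Fintype.card_ne_zero
  rw [inner_chirpColumn hψ]
  simp [hn]

lemma norm_chirpColumn (hψ : ψ.IsPrimitive) (a b c : F) : ‖chirpColumn ψ a b c‖ = 1 := by
  have h : ‖chirpColumn ψ a b c‖ ^ 2 = 1 := by
    rw [norm_sq_eq_re_inner (𝕜 := ℂ), inner_chirpColumn_self hψ, RCLike.one_re]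
  exact (pow_eq_one_iff_of_nonneg (norm_nonneg _) two_ne_zero).mp h

lemma inner_chirpColumn_of_ne (hψ : ψ.IsPrimitive) {a a' : F} (ha : a ≠ a') (b c b' c' : F) :
    ⟪chirpColumn ψ a b c, chirpColumn ψ a' b' c'⟫ =
      (1 / (Fintype.card F : ℂ)) * ψ ((b' - b) * ((c - c') / (a' - a))) := by
  classical
  have hd : a' - a ≠ 0 := sub_ne_zero.mpr ha.symm
  have hline : ∀ φ : F, (a' - a) * φ + (c' - c) = 0 ↔ (c - c') / (a' - a) = φ := by
    intro φ
    rw [div_eq_iff hd]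
    constructor <;> intro h <;> linear_combination (-1 : F) * h
  simp only [inner_chirpColumn hψ, hline, Finset.sum_ite_eq, Finset.mem_univ, if_true]

lemma norm_inner_chirpColumn_of_ne (hψ : ψ.IsPrimitive) {a a' : F} (ha : a ≠ a') (b c b' c' : F) :
    ‖⟪chirpColumn ψ a b c, chirpColumn ψ a' b' c'⟫‖ = 1 / Fintype.card F := by
  rw [inner_chirpColumn_of_ne hψ ha, norm_mul, AddChar.norm_apply, mul_one]
  simp

lemma inner_chirpColumn_of_ne_of_eq (hψ : ψ.IsPrimitive) (a : F) {b c b' c' : F}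
    (h : (b, c) ≠ (b', c')) :
    ⟪chirpColumn ψ a b c, chirpColumn ψ a b' c'⟫ = 0 := by
  classical
  rw [inner_chirpColumn hψ]
  by_cases hc : c = c'
  · subst hc
    have hb : b' - b ≠ 0 := sub_ne_zero.mpr fun hb => h (by rw [hb])
    simp only [sub_self, zero_mul, add_zero, if_true, mul_comm (b' - b),
      AddChar.sum_mulShift _ hψ, if_neg hb, Nat.cast_zero, mul_zero]
  · have hc' : c' - c ≠ 0 := sub_ne_zero.mpr (Ne.symm hc)
    simp [hc']

end ChirpColumn

theorem stmt4 (p : ℕ) (hp : p.Prime) [NeZero p]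
    (v : ZMod p × ZMod p × ZMod p → EuclideanSpace ℂ (ZMod p × ZMod p))
    (hv : ∀ a b c : ZMod p, v (a, b, c) =
      WithLp.toLp 2 (fun φγ : ZMod p × ZMod p => (1 / (p : ℂ)) * ep p (φγ.2 * (a * φγ.1 + c) + b * φγ.1))) :
    (∀ q, ‖v q‖ = 1) ∧
    (∀ a b c a' b' c' : ZMod p, (a, b, c) ≠ (a', b', c') →
      (a ≠ a' → ‖⟪v (a, b, c), v (a', b', c')⟫‖ = 1 / p) ∧
      (a = a' → ⟪v (a, b, c), v (a', b', c')⟫ = 0)) ∧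
    (∀ q q', q ≠ q' → ‖⟪v q, v q'⟫‖ ≤ 1 / p) ∧
    (∃ q q', q ≠ q' ∧ ‖⟪v q, v q'⟫‖ = 1 / p) := by
  have : Fact p.Prime := ⟨hp⟩
  have hψ := ZMod.isPrimitive_stdAddChar p
  have hv' : ∀ a b c, v (a, b, c) = chirpColumn ZMod.stdAddChar a b c := by
    intro a b c
    simp only [hv, chirpColumn, ZMod.card, ep_eq_stdAddChar]
  have hcols : ∀ a b c a' b' c' : ZMod p, (a, b, c) ≠ (a', b', c') →
      (a ≠ a' → ‖⟪v (a, b, c), v (a', b', c')⟫‖ = 1 / p) ∧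
      (a = a' → ⟪v (a, b, c), v (a', b', c')⟫ = 0) := by
    intro a b c a' b' c' hne
    simp only [hv']
    refine ⟨fun ha => ?_, ?_⟩
    · rw [norm_inner_chirpColumn_of_ne hψ ha, ZMod.card]
    · rintro rfl
      exact inner_chirpColumn_of_ne_of_eq hψ a fun h => hne (by rw [h])
  refine ⟨fun ⟨a, b, c⟩ => hv' a b c ▸ norm_chirpColumn hψ a b c, hcols, ?_, ?_⟩
  · rintro ⟨a, b, c⟩ ⟨a', b', c'⟩ hne
    obtain ha | rfl := ne_or_eq a a'
    · exact ((hcols a b c a' b' c' hne).1 ha).le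
    · rw [(hcols a b c a b' c' hne).2 rfl, norm_zero]
      positivity
  · have h01 : (0 : ZMod p) ≠ 1 := zero_ne_one
    exact ⟨(0, 0, 0), (1, 0, 0), fun h => h01 (congrArg Prod.fst h),
      (hcols 0 0 0 1 0 0 fun h => h01 (congrArg Prod.fst h)).1 h01⟩
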